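/- In the square lattice Z², consider the half-plane Z × Z≥0. If a path P in an edge subgraph H connects (x₁, 0) to (x₂, 0) with x₁ ≤ −1 and x₂ ≥ 1, and P stays in the closed upper half-plane and passes only through vertices with y ≥ 1 except at its endpoints, then the plaquette (face) centered at (1/2, 1/2) lies inside the bounded region enclosed by P together with the segment of the x-axis from (x₁,0) to (x₂,0); consequently any dual path from this plaquette to infinity must cross either P or the x-axis segment. -/

import Mathlib

/-
Close `p` up by the segment of the `x`-axis into a closed lattice walk `γ`, and for a plaquette `c`
count mod 2 the edges of `γ` crossed by the vertical ray going down from the centre of `c`. A dual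
step changes this parity exactly when it crosses an edge of `γ`: for a vertical step this is
immediate, and for a horizontal step the change is the number of edges of `γ` meeting a half-column,
which is even for a closed walk. The parity is 1 at the plaquette `(0, 0)` (the ray meets only the
axis edge `(0,0)(1,0)`, as the path stays at height `≥ 1` away from its endpoints) and 0 far away, so
a dual walk escaping to infinity must cross `γ`.
-/

/-- Nearest-neighbor adjacency on `ℤ²` (used for both the primal lattice and the
dual lattice of plaquettes, where the plaquette `(a, b)` has center `(a+1/2, b+1/2)`). -/
def latAdj (u v : ℤ × ℤ) : Prop :=
  (u.1 - v.1).natAbs + (u.2 - v.2).natAbs = 1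

/-- The primal edge crossed by the dual edge between adjacent plaquettes `a` and `b`. -/
def crossedEdge (a b : ℤ × ℤ) : Sym2 (ℤ × ℤ) :=
  if a.1 + 1 = b.1 then s(((b.1, b.2) : ℤ × ℤ), ((b.1, b.2 + 1) : ℤ × ℤ))
  else if b.1 + 1 = a.1 then s(((a.1, a.2) : ℤ × ℤ), ((a.1, a.2 + 1) : ℤ × ℤ))
  else if a.2 + 1 = b.2 then s(((a.1, b.2) : ℤ × ℤ), ((a.1 + 1, b.2) : ℤ × ℤ))
  else s(((b.1, a.2) : ℤ × ℤ), ((b.1 + 1, a.2) : ℤ × ℤ))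

open Finset

lemma latAdj_iff {u v : ℤ × ℤ} : latAdj u v ↔
    v = (u.1 + 1, u.2) ∨ v = (u.1 - 1, u.2) ∨ v = (u.1, u.2 + 1) ∨ v = (u.1, u.2 - 1) := by
  obtain ⟨a, b⟩ := u; obtain ⟨c, d⟩ := v
  simp only [latAdj, Prod.mk.injEq]
  omega

lemma crossedEdge_right (a b : ℤ) : crossedEdge (a, b) (a + 1, b) =
    s((a + 1, b), (a + 1, b + 1)) := by
  simp [crossedEdge]

lemma crossedEdge_left (a b : ℤ) : crossedEdge (a + 1, b) (a, b) =
    s((a + 1, b), (a + 1, b + 1)) := by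
  simp [crossedEdge, add_assoc]

lemma crossedEdge_up (a b : ℤ) : crossedEdge (a, b) (a, b + 1) =
    s((a, b + 1), (a + 1, b + 1)) := by
  simp [crossedEdge]

lemma crossedEdge_down (a b : ℤ) : crossedEdge (a, b + 1) (a, b) =
    s((a, b + 1), (a + 1, b + 1)) := by
  simp [crossedEdge, add_assoc]

/-- Indicator that the edge `uv` crosses the downward vertical ray from the centre
`(c.1 + 1/2, c.2 + 1/2)` of the plaquette `c`. -/
def rayCrossing (c u v : ℤ × ℤ) : ZMod 2 :=
  if u.2 = v.2 ∧ u.2 ≤ c.2 ∧ (u.1 = c.1 ∧ v.1 = c.1 + 1 ∨ v.1 = c.1 ∧ u.1 = c.1 + 1) then 1 else 0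

def columnBelow (c w : ℤ × ℤ) : ZMod 2 :=
  if w.1 = c.1 ∧ w.2 ≤ c.2 then 1 else 0

lemma rayCrossing_up (a b : ℤ) (u v : ℤ × ℤ) :
    rayCrossing (a, b + 1) u v = rayCrossing (a, b) u v +
      if s(u, v) = s((a, b + 1), (a + 1, b + 1)) then 1 else 0 := by
  simp only [rayCrossing, Sym2.eq_iff, Prod.ext_iff]
  split_ifs <;> first | decide | omega

/-- Shifting the ray one column right only changes the status of horizontal edges with an endpoint
in the column below `(a + 1, b)`, counted by `columnBelow` at both ends, and of the vertical edge on
top of that column. -/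
lemma rayCrossing_right {u v : ℤ × ℤ} (a b : ℤ) (huv : latAdj u v) :
    rayCrossing (a + 1, b) u v = rayCrossing (a, b) u v +
      (if s(u, v) = s((a + 1, b), (a + 1, b + 1)) then 1 else 0) +
      columnBelow (a + 1, b) u + columnBelow (a + 1, b) v := by
  obtain ⟨x, y⟩ := u
  rw [latAdj_iff] at huv
  rcases huv with rfl | rfl | rfl | rfl <;>
    simp only [rayCrossing, columnBelow, Sym2.eq_iff, Prod.mk.injEq, true_and] <;>
    split_ifs <;> first | decide | omega

lemma CharTwo.sum_range_add_succ {R : Type*} [Ring R] [CharP R 2] (f : ℕ → R) (N : ℕ) :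
    ∑ i ∈ range N, (f i + f (i + 1)) = f 0 + f N := by
  rw [add_comm, ← CharTwo.sub_eq_add, ← Finset.sum_range_sub f N]
  exact sum_congr rfl fun i _ => by rw [CharTwo.sub_eq_add, add_comm]

/-- For a closed walk `γ`, this is the winding number of `γ` around the plaquette `c` mod 2. -/
def rayParity (γ : ℕ → ℤ × ℤ) (N : ℕ) (c : ℤ × ℤ) : ZMod 2 :=
  ∑ i ∈ range N, rayCrossing c (γ i) (γ (i + 1))

section ClosedWalk

variable {γ : ℕ → ℤ × ℤ} {N : ℕ}

lemma rayParity_up (a b : ℤ) (hno : ∀ i < N, s(γ i, γ (i + 1)) ≠ s((a, b + 1), (a + 1, b + 1))) :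
    rayParity γ N (a, b + 1) = rayParity γ N (a, b) := by
  refine sum_congr rfl fun i hi => ?_
  rw [rayCrossing_up, if_neg (hno i (mem_range.mp hi)), add_zero]

lemma rayParity_right (hγ : ∀ i < N, latAdj (γ i) (γ (i + 1))) (hclosed : γ N = γ 0) (a b : ℤ)
    (hno : ∀ i < N, s(γ i, γ (i + 1)) ≠ s((a + 1, b), (a + 1, b + 1))) :
    rayParity γ N (a + 1, b) = rayParity γ N (a, b) := by
  have hstep : ∀ i ∈ range N, rayCrossing (a + 1, b) (γ i) (γ (i + 1)) =
      rayCrossing (a, b) (γ i) (γ (i + 1)) +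
        (columnBelow (a + 1, b) (γ i) + columnBelow (a + 1, b) (γ (i + 1))) := by
    intro i hi
    rw [rayCrossing_right a b (hγ i (mem_range.mp hi)), if_neg (hno i (mem_range.mp hi)),
      add_zero, add_assoc]
  rw [rayParity, sum_congr rfl hstep, sum_add_distrib,
    CharTwo.sum_range_add_succ (fun i => columnBelow (a + 1, b) (γ i)), hclosed,
    CharTwo.add_self_eq_zero, add_zero, rayParity]

lemma rayParity_eq_of_latAdj (hγ : ∀ i < N, latAdj (γ i) (γ (i + 1))) (hclosed : γ N = γ 0)
    {c d : ℤ × ℤ} (hcd : latAdj c d) (hno : ∀ i < N, s(γ i, γ (i + 1)) ≠ crossedEdge c d) :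
    rayParity γ N d = rayParity γ N c := by
  obtain ⟨a, b⟩ := c
  rw [latAdj_iff] at hcd
  rcases hcd with rfl | rfl | rfl | rfl
  · rw [crossedEdge_right] at hno
    exact rayParity_right hγ hclosed a b hno
  · obtain ⟨a, rfl⟩ : ∃ a', a = a' + 1 := ⟨a - 1, by ring⟩
    rw [add_sub_cancel_right, crossedEdge_left] at *
    exact (rayParity_right hγ hclosed a b hno).symm
  · rw [crossedEdge_up] at hno
    exact rayParity_up a b hno
  · obtain ⟨b, rfl⟩ : ∃ b', b = b' + 1 := ⟨b - 1, by ring⟩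
    rw [add_sub_cancel_right, crossedEdge_down] at *
    exact (rayParity_up a b hno).symm

end ClosedWalk

lemma exists_coord_bound (γ : ℕ → ℤ × ℤ) (N : ℕ) :
    ∃ B : ℕ, ∀ i ≤ N, (γ i).1.natAbs ≤ B ∧ (γ i).2 ≤ B := by
  refine ⟨∑ j ∈ range (N + 1), ((γ j).1.natAbs + (γ j).2.toNat), fun i hi => ?_⟩
  have hi' : i ∈ range (N + 1) := mem_range.mpr (by omega)
  have := single_le_sum (f := fun j => (γ j).1.natAbs + (γ j).2.toNat)
    (fun _ _ => Nat.zero_le _) hi'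
  omega

section Escape

variable {γ : ℕ → ℤ × ℤ} {N : ℕ}

lemma rayParity_eq_zero_of_natAbs_le {B : ℕ} (hB : ∀ i ≤ N, (γ i).1.natAbs ≤ B) {c : ℤ × ℤ}
    (hc : B + 2 ≤ c.1.natAbs) : rayParity γ N c = 0 := by
  refine sum_eq_zero fun i hi => if_neg ?_
  have := hB i (mem_range.mp hi).le
  have := hB (i + 1) (mem_range.mp hi)
  omega

lemma rayParity_eq_zero_of_le (hγ : ∀ i < N, latAdj (γ i) (γ (i + 1))) (hclosed : γ N = γ 0)
    {B : ℕ} (hB : ∀ i ≤ N, (γ i).1.natAbs ≤ B ∧ (γ i).2 ≤ B) {c : ℤ × ℤ} (hc : B ≤ c.2) :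
    rayParity γ N c = 0 := by
  have hshift : ∀ k : ℕ, rayParity γ N (c.1 + k, c.2) = rayParity γ N c := by
    intro k
    induction k with
    | zero => simp
    | succ k ih =>
      rw [← ih, Nat.cast_succ, ← add_assoc]
      refine rayParity_right hγ hclosed _ _ fun i hi he => ?_
      have h1 := (hB i hi.le).2
      have h2 := (hB (i + 1) hi).2
      rw [Sym2.eq_iff] at he
      rcases he with ⟨-, he⟩ | ⟨he, -⟩ <;> simp only [he] at h1 h2 <;> omega
  rw [← hshift (B + 2 + c.1.natAbs)]
  exact rayParity_eq_zero_of_natAbs_le (fun i hi => (hB i hi).1) (by simp only; omega)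

theorem exists_crossedEdge_eq_of_rayParity_eq_one (hγ : ∀ i < N, latAdj (γ i) (γ (i + 1)))
    (hclosed : γ N = γ 0) {q : ℕ → ℤ × ℤ} (hq : ∀ n, latAdj (q n) (q (n + 1)))
    (hqinf : ∀ R : ℤ, ∃ n, R < ((q n).1.natAbs : ℤ) + (q n).2) (hq0 : rayParity γ N (q 0) = 1) :
    ∃ n, ∃ i < N, crossedEdge (q n) (q (n + 1)) = s(γ i, γ (i + 1)) := by
  by_contra! hno
  have hconst : ∀ n, rayParity γ N (q n) = 1 := by
    intro n
    induction n with
    | zero => exact hq0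
    | succ n ih =>
      rw [rayParity_eq_of_latAdj hγ hclosed (hq n) fun i hi he => hno n i hi he.symm, ih]
  obtain ⟨B, hB⟩ := exists_coord_bound γ N
  obtain ⟨n, hn⟩ := hqinf (2 * B + 2)
  have hzero : rayParity γ N (q n) = 0 := by
    by_cases hy : (B : ℤ) ≤ (q n).2
    · exact rayParity_eq_zero_of_le hγ hclosed hB hy
    · exact rayParity_eq_zero_of_natAbs_le (fun i hi => (hB i hi).1) (by omega)
  exact zero_ne_one (hzero.symm.trans (hconst n))

end Escape

/-- The closed curve formed by `p` together with the segment of the `x`-axis, traversed back from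
`(x₂, 0)`. -/
def closeAlongAxis {L : ℕ} (p : Fin (L + 1) → ℤ × ℤ) (x₂ : ℤ) (n : ℕ) : ℤ × ℤ :=
  if h : n ≤ L then p ⟨n, Nat.lt_succ_of_le h⟩ else (x₂ - (n - L : ℕ), 0)

section CloseAlongAxis

variable {L : ℕ} {p : Fin (L + 1) → ℤ × ℤ} {x₁ x₂ : ℤ}

lemma closeAlongAxis_of_le {n : ℕ} (hn : n ≤ L) :
    closeAlongAxis p x₂ n = p ⟨n, Nat.lt_succ_of_le hn⟩ :=
  dif_pos hn

lemma closeAlongAxis_add (hpL : p (Fin.last L) = (x₂, 0)) (k : ℕ) :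
    closeAlongAxis p x₂ (L + k) = (x₂ - k, 0) := by
  rcases k.eq_zero_or_pos with rfl | hk
  · rw [Nat.add_zero, closeAlongAxis_of_le le_rfl, Nat.cast_zero, sub_zero]
    exact hpL
  · rw [closeAlongAxis, dif_neg (by omega), Nat.add_sub_cancel_left]

lemma closeAlongAxis_latAdj (hpL : p (Fin.last L) = (x₂, 0))
    (hpadj : ∀ i : Fin L, latAdj (p i.castSucc) (p i.succ)) {i : ℕ} :
    latAdj (closeAlongAxis p x₂ i) (closeAlongAxis p x₂ (i + 1)) := by
  rcases lt_or_ge i L with hi | hi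
  · rw [closeAlongAxis_of_le hi.le, closeAlongAxis_of_le hi]
    exact hpadj ⟨i, hi⟩
  · obtain ⟨k, rfl⟩ := Nat.exists_eq_add_of_le hi
    rw [add_assoc, closeAlongAxis_add hpL, closeAlongAxis_add hpL, latAdj]
    simp

lemma closeAlongAxis_closed (hp0 : p 0 = (x₁, 0)) (hpL : p (Fin.last L) = (x₂, 0))
    (hx : x₁ ≤ x₂) : closeAlongAxis p x₂ (L + (x₂ - x₁).toNat) = closeAlongAxis p x₂ 0 := by
  rw [closeAlongAxis_add hpL, closeAlongAxis_of_le (Nat.zero_le _), Fin.mk_zero, hp0]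
  congr
  omega

lemma closeAlongAxis_edge (hpL : p (Fin.last L) = (x₂, 0)) {i : ℕ}
    (hi : i < L + (x₂ - x₁).toNat) :
    (∃ j : Fin L,
      s(closeAlongAxis p x₂ i, closeAlongAxis p x₂ (i + 1)) = s(p j.castSucc, p j.succ)) ∨
    ∃ x : ℤ, x₁ ≤ x ∧ x + 1 ≤ x₂ ∧
      s(closeAlongAxis p x₂ i, closeAlongAxis p x₂ (i + 1)) = s((x, 0), (x + 1, 0)) := by
  rcases lt_or_ge i L with hiL | hiL
  · left
    refine ⟨⟨i, hiL⟩, ?_⟩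
    rw [closeAlongAxis_of_le hiL.le, closeAlongAxis_of_le hiL]
    rfl
  · right
    obtain ⟨k, rfl⟩ := Nat.exists_eq_add_of_le hiL
    refine ⟨x₂ - k - 1, by omega, by omega, ?_⟩
    rw [add_assoc, closeAlongAxis_add hpL, closeAlongAxis_add hpL]
    simp only [Sym2.eq_iff, Prod.mk.injEq, and_true]
    push_cast
    omega

lemma rayParity_closeAlongAxis (hx₁ : x₁ ≤ -1) (hx₂ : 1 ≤ x₂) (hp0 : p 0 = (x₁, 0))
    (hpL : p (Fin.last L) = (x₂, 0))
    (hpint : ∀ i : Fin (L + 1), i ≠ 0 → i ≠ Fin.last L → 1 ≤ (p i).2) :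
    rayParity (closeAlongAxis p x₂) (L + (x₂ - x₁).toNat) (0, 0) = 1 := by
  have hpath : ∀ i ∈ range L,
      rayCrossing (0, 0) (closeAlongAxis p x₂ i) (closeAlongAxis p x₂ (i + 1)) = 0 := by
    intro i hi
    have hiL := mem_range.mp hi
    rw [closeAlongAxis_of_le hiL.le, closeAlongAxis_of_le hiL]
    refine if_neg ?_
    rintro ⟨-, hy, hx⟩
    rcases eq_or_ne i 0 with rfl | hi0
    · rw [Fin.mk_zero, hp0] at hx
      omega
    · have := hpint ⟨i, by omega⟩ (by simpa [Fin.ext_iff] using hi0) (by simp [Fin.ext_iff]; omega)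
      omega
  have haxis : ∀ k ∈ range (x₂ - x₁).toNat, k ≠ (x₂ - 1).toNat →
      rayCrossing (0, 0) (closeAlongAxis p x₂ (L + k)) (closeAlongAxis p x₂ (L + k + 1)) = 0 := by
    intro k _ hk
    rw [add_assoc, closeAlongAxis_add hpL, closeAlongAxis_add hpL]
    refine if_neg ?_
    rintro ⟨-, -, hx⟩
    push_cast at hx
    omega
  rw [rayParity, sum_range_add, sum_eq_zero hpath, zero_add,
    sum_eq_single (x₂ - 1).toNat haxis (fun h => absurd (mem_range.mpr (by omega)) h),
    add_assoc, closeAlongAxis_add hpL, closeAlongAxis_add hpL]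
  refine if_pos ⟨rfl, le_rfl, Or.inr ⟨?_, ?_⟩⟩ <;> push_cast <;> omega

end CloseAlongAxis

theorem stmt_12_general (x₁ x₂ : ℤ) (hx₁ : x₁ ≤ -1) (hx₂ : 1 ≤ x₂)
    (L : ℕ) (p : Fin (L + 1) → ℤ × ℤ)
    (hp0 : p 0 = (x₁, 0)) (hpL : p (Fin.last L) = (x₂, 0))
    (hpadj : ∀ i : Fin L, latAdj (p i.castSucc) (p i.succ))
    (hpint : ∀ i : Fin (L + 1), i ≠ 0 → i ≠ Fin.last L → 1 ≤ (p i).2)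
    (q : ℕ → ℤ × ℤ) (hq0 : q 0 = (0, 0))
    (hqadj : ∀ n : ℕ, latAdj (q n) (q (n + 1)))
    (hqinf : ∀ R : ℤ, ∃ n, R < ((q n).1.natAbs : ℤ) + (q n).2) :
    ∃ n : ℕ,
      (∃ i : Fin L, crossedEdge (q n) (q (n + 1)) = s(p i.castSucc, p i.succ)) ∨
      (∃ x : ℤ, x₁ ≤ x ∧ x + 1 ≤ x₂ ∧
        crossedEdge (q n) (q (n + 1)) = s(((x, 0) : ℤ × ℤ), ((x + 1, 0) : ℤ × ℤ))) := by
  obtain ⟨n, i, hi, hcross⟩ := exists_crossedEdge_eq_of_rayParity_eq_one (γ := closeAlongAxis p x₂)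
    (fun _ _ => closeAlongAxis_latAdj hpL hpadj) (closeAlongAxis_closed hp0 hpL (by omega))
    hqadj hqinf (hq0 ▸ rayParity_closeAlongAxis hx₁ hx₂ hp0 hpL hpint)
  refine ⟨n, ?_⟩
  rw [hcross]
  exact closeAlongAxis_edge hpL hi

/-- Topological blocking fact of Proposition 2.7 (Figure 3): if a path `p` in the
closed upper half-plane joins `(x₁, 0)` to `(x₂, 0)` with `x₁ ≤ −1`, `x₂ ≥ 1`,
passing only through vertices with `y ≥ 1` except at its endpoints, then any dual
path of plaquettes starting at the plaquette `(0,0)` (centered at `(1/2, 1/2)`),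
staying in the half-plane and escaping to infinity, must cross either an edge of `p`
or an edge of the `x`-axis segment from `(x₁, 0)` to `(x₂, 0)`. -/
theorem stmt_12 (x₁ x₂ : ℤ) (hx₁ : x₁ ≤ -1) (hx₂ : 1 ≤ x₂)
    (L : ℕ) (p : Fin (L + 1) → ℤ × ℤ)
    (hp0 : p 0 = (x₁, 0)) (hpL : p (Fin.last L) = (x₂, 0))
    (hpadj : ∀ i : Fin L, latAdj (p i.castSucc) (p i.succ))
    (hpy : ∀ i, 0 ≤ (p i).2)
    (hpint : ∀ i : Fin (L + 1), i ≠ 0 → i ≠ Fin.last L → 1 ≤ (p i).2)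
    (q : ℕ → ℤ × ℤ) (hq0 : q 0 = (0, 0))
    (hqadj : ∀ n : ℕ, latAdj (q n) (q (n + 1)))
    (hqy : ∀ n : ℕ, 0 ≤ (q n).2)
    (hqinf : ∀ R : ℤ, ∃ n, R < ((q n).1.natAbs : ℤ) + (q n).2) :
    ∃ n : ℕ,
      (∃ i : Fin L, crossedEdge (q n) (q (n + 1)) = s(p i.castSucc, p i.succ)) ∨
      (∃ x : ℤ, x₁ ≤ x ∧ x + 1 ≤ x₂ ∧
        crossedEdge (q n) (q (n + 1)) = s(((x, 0) : ℤ × ℤ), ((x + 1, 0) : ℤ × ℤ))) :=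
  stmt_12_general x₁ x₂ hx₁ hx₂ L p hp0 hpL hpadj hpint q hq0 hqadj hqinf
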